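/- arXiv:1407.6458 — 2 statements merged into one kernel-verified Lean document; each statement's English description precedes it below -/
import Mathlib

section
/- Let Ψ(x,z) = e^{xz}·[[z − x⁻¹, x⁻², −x⁻³],[0, z − x⁻¹, x⁻²],[0, 0, z − x⁻¹]]. Then −∂²Ψ/∂x² + 2·[[x⁻², −2x⁻³, 3x⁻⁴],[0, x⁻², −2x⁻³],[0, 0, x⁻²]]·Ψ = −z²·Ψ for all x ≠ 0 and all z. -/
open Matrix

noncomputable def Psi (x z : ℂ) : Matrix (Fin 3) (Fin 3) ℂ :=
  Complex.exp (x * z) •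
    !![z - x⁻¹, (x ^ 2)⁻¹, -(x ^ 3)⁻¹;
       0, z - x⁻¹, (x ^ 2)⁻¹;
       0, 0, z - x⁻¹]

noncomputable def U (x : ℂ) : Matrix (Fin 3) (Fin 3) ℂ :=
  (2 : ℂ) • !![(x ^ 2)⁻¹, -2 * (x ^ 3)⁻¹, 3 * (x ^ 4)⁻¹;
               0, (x ^ 2)⁻¹, -2 * (x ^ 3)⁻¹;
               0, 0, (x ^ 2)⁻¹]

open Complex Filter Topology

/-!
`Ψ` and `U` are upper triangular Toeplitz matrices, i.e. polynomials in the nilpotent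
shift `N`: with `X = x + N` one has `Ψ = e^{xz} (z - X⁻¹)` and `U = 2 X⁻²`, so the claim is
the matrix form of the scalar identity `-ψ'' + 2 x⁻² ψ = -z² ψ` for `ψ = e^{xz} (z - x⁻¹)`.
Such matrices multiply like power series truncated at `N³`, so the equation splits into one
scalar identity per diagonal, each checked by differentiating `e^{xz} (a + c x⁻ⁿ)` twice.
-/

def upperToeplitz3 {R : Type*} [Zero R] (a b c : R) : Matrix (Fin 3) (Fin 3) R :=
  !![a, b, c; 0, a, b; 0, 0, a]

section upperToeplitz3

variable {R : Type*}

theorem upperToeplitz3_add [AddZeroClass R] (a b c a' b' c' : R) :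
    upperToeplitz3 a b c + upperToeplitz3 a' b' c' =
      upperToeplitz3 (a + a') (b + b') (c + c') := by
  ext i j; fin_cases i <;> fin_cases j <;> simp [upperToeplitz3]

theorem neg_upperToeplitz3 [NegZeroClass R] (a b c : R) :
    -upperToeplitz3 a b c = upperToeplitz3 (-a) (-b) (-c) := by
  ext i j; fin_cases i <;> fin_cases j <;> simp [upperToeplitz3]

theorem smul_upperToeplitz3 {S : Type*} [Zero R] [SMulZeroClass S R] (r : S) (a b c : R) :
    r • upperToeplitz3 a b c = upperToeplitz3 (r • a) (r • b) (r • c) := by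
  ext i j; fin_cases i <;> fin_cases j <;> simp [upperToeplitz3]

theorem upperToeplitz3_mul [NonUnitalNonAssocSemiring R] (a b c a' b' c' : R) :
    upperToeplitz3 a b c * upperToeplitz3 a' b' c' =
      upperToeplitz3 (a * a') (a * b' + b * a') (a * c' + b * b' + c * a') := by
  simp [upperToeplitz3, add_assoc]

theorem of_iteratedDeriv_upperToeplitz3 {𝕜 F : Type*} [NontriviallyNormedField 𝕜]
    [NormedAddCommGroup F] [NormedSpace 𝕜 F] (n : ℕ) (f g h : 𝕜 → F) (x : 𝕜) :
    (of fun i j => iteratedDeriv n (fun s => upperToeplitz3 (f s) (g s) (h s) i j) x) =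
      upperToeplitz3 (iteratedDeriv n f x) (iteratedDeriv n g x) (iteratedDeriv n h x) := by
  ext i j; fin_cases i <;> fin_cases j <;> simp [upperToeplitz3]

end upperToeplitz3

theorem hasDerivAt_inv_pow {𝕜 : Type*} [NontriviallyNormedField 𝕜] (n : ℕ) {s : 𝕜} (hs : s ≠ 0) :
    HasDerivAt (fun t => (t ^ n)⁻¹) (-n * (s ^ (n + 1))⁻¹) s := by
  refine ((hasDerivAt_pow n s).fun_inv (pow_ne_zero n hs)).congr_deriv ?_
  rcases n with _ | n
  · simp
  · rw [Nat.add_sub_cancel]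
    field_simp
    ring

theorem iteratedDeriv_two_eq_of_hasDerivAt {𝕜 F : Type*} [NontriviallyNormedField 𝕜]
    [NormedAddCommGroup F] [NormedSpace 𝕜 F] {f f' : 𝕜 → F} {f'' : F} {x : 𝕜}
    (hf : ∀ᶠ s in 𝓝 x, HasDerivAt f (f' s) s) (hf' : HasDerivAt f' f'' x) :
    iteratedDeriv 2 f x = f'' := by
  have hderiv : deriv f =ᶠ[𝓝 x] f' := hf.mono fun s hs => hs.deriv
  rw [iteratedDeriv_succ, iteratedDeriv_one, hderiv.deriv_eq]
  exact hf'.deriv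

theorem iteratedDeriv_two_exp_mul {p p' : ℂ → ℂ} {p'' x z : ℂ}
    (hp : ∀ᶠ s in 𝓝 x, HasDerivAt p (p' s) s) (hp' : HasDerivAt p' p'' x) :
    iteratedDeriv 2 (fun s => exp (s * z) * p s) x =
      exp (x * z) * (z ^ 2 * p x + 2 * z * p' x + p'') := by
  have hexp (s : ℂ) : HasDerivAt (fun t => exp (t * z)) (exp (s * z) * z) s := by
    simpa using ((hasDerivAt_id s).mul_const z).cexp
  refine iteratedDeriv_two_eq_of_hasDerivAt (f' := fun s => exp (s * z) * (z * p s + p' s)) ?_ ?_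
  · filter_upwards [hp] with s hs
    exact ((hexp s).fun_mul hs).congr_deriv (by ring)
  · exact ((hexp x).fun_mul ((hp.self_of_nhds.const_mul z).fun_add hp')).congr_deriv (by ring)

theorem iteratedDeriv_two_exp_mul_add_inv_pow (z a c : ℂ) (n : ℕ) {x : ℂ} (hx : x ≠ 0) :
    iteratedDeriv 2 (fun s => exp (s * z) * (a + c * (s ^ n)⁻¹)) x =
      exp (x * z) * (z ^ 2 * (a + c * (x ^ n)⁻¹) - 2 * z * c * n * (x ^ (n + 1))⁻¹
        + c * n * (n + 1) * (x ^ (n + 2))⁻¹) := by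
  rw [iteratedDeriv_two_exp_mul (p' := fun s => -(c * n) * (s ^ (n + 1))⁻¹)
    (p'' := c * n * (n + 1) * (x ^ (n + 2))⁻¹)]
  · ring
  · filter_upwards [isOpen_ne.mem_nhds hx] with s hs
    exact (((hasDerivAt_inv_pow n hs).const_mul c).const_add a).congr_deriv (by ring)
  · refine ((hasDerivAt_inv_pow (n + 1) hx).const_mul (-(c * n))).congr_deriv ?_
    push_cast
    ring

-- Entries in the shape `a + c * (s ^ n)⁻¹` of `iteratedDeriv_two_exp_mul_add_inv_pow`.
theorem Psi_eq_upperToeplitz3 (s z : ℂ) :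
    Psi s z = upperToeplitz3 (exp (s * z) * (z + -1 * (s ^ 1)⁻¹))
      (exp (s * z) * (0 + 1 * (s ^ 2)⁻¹)) (exp (s * z) * (0 + -1 * (s ^ 3)⁻¹)) := by
  simp [Psi, upperToeplitz3, smul_of, sub_eq_add_neg]

theorem U_eq_upperToeplitz3 (x : ℂ) :
    U x = upperToeplitz3 (2 * (x ^ 2)⁻¹) (-4 * (x ^ 3)⁻¹) (6 * (x ^ 4)⁻¹) := by
  ext i j
  fin_cases i <;> fin_cases j <;> simp [U, upperToeplitz3] <;> ring

theorem stmt5 (x z : ℂ) (hx : x ≠ 0) :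
    -(Matrix.of fun i j => iteratedDeriv 2 (fun s => Psi s z i j) x) + U x * Psi x z
      = (-(z ^ 2)) • Psi x z := by
  simp only [Psi_eq_upperToeplitz3, U_eq_upperToeplitz3, of_iteratedDeriv_upperToeplitz3,
    iteratedDeriv_two_exp_mul_add_inv_pow _ _ _ _ hx, upperToeplitz3_mul, neg_upperToeplitz3,
    upperToeplitz3_add, smul_upperToeplitz3]
  congr 1 <;> push_cast [smul_eq_mul] <;> field_simp <;> ring
end

section
/- Let Ψ(x,z) = e^{xz}·[[z − x⁻¹, x⁻², −x⁻³],[0, z − x⁻¹, x⁻²],[0, 0, z − x⁻¹]]. Then (∂_z²Ψ)·E₃₁ + (∂_zΨ)·[[0,0,0],[1,0,0],[−2z⁻¹,1,0]] + Ψ·[[1,0,0],[−2z⁻¹,2,0],[0,0,1]] = [[1,0,0],[x,2,0],[x²,x,1]]·Ψ for all x ≠ 0, z ≠ 0, where E₃₁ is the 3×3 matrix unit with 1 in position (3,1). -/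
open Matrix

/-!
Since `Ψ(x, w) = e^{xw} (w • 1 + Ψ(x, 0))`, every entry is `e^{xw}` times an affine function of
`w`, whence `∂_z Ψ = x Ψ + e^{xz} 1` and `∂_z² Ψ = x² Ψ + 2x e^{xz} 1`. Substituting these, both
sides become `e^{xz}` times matrices with entries rational in `x` and `z`, which agree entrywise.
-/

lemma Psi_apply (x w : ℂ) (i j : Fin 3) :
    Psi x w i j =
      Complex.exp (x * w) * (w * (1 : Matrix (Fin 3) (Fin 3) ℂ) i j + Psi x 0 i j) := by
  fin_cases i <;> fin_cases j <;> simp [Psi] <;> ring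

lemma hasDerivAt_exp_mul (x z : ℂ) :
    HasDerivAt (fun w => Complex.exp (x * w)) (x * Complex.exp (x * z)) z := by
  simpa [mul_comm] using ((hasDerivAt_id z).const_mul x).cexp

lemma hasDerivAt_Psi_apply (x z : ℂ) (i j : Fin 3) :
    HasDerivAt (fun w => Psi x w i j)
      (x * Psi x z i j + Complex.exp (x * z) * (1 : Matrix (Fin 3) (Fin 3) ℂ) i j) z := by
  rw [funext (Psi_apply x · i j), Psi_apply x z]
  exact ((hasDerivAt_exp_mul x z).mul ((hasDerivAt_mul_const _).add_const _)).congr_deriv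
    (by ring)

lemma deriv_Psi_apply (x : ℂ) (i j : Fin 3) :
    deriv (fun w => Psi x w i j)
      = fun z => x * Psi x z i j + Complex.exp (x * z) * (1 : Matrix (Fin 3) (Fin 3) ℂ) i j :=
  funext fun z => (hasDerivAt_Psi_apply x z i j).deriv

lemma entrywise_deriv_Psi (x z : ℂ) :
    (Matrix.of fun i j => deriv (fun w => Psi x w i j) z)
      = x • Psi x z + Complex.exp (x * z) • 1 := by
  ext i j
  simp [deriv_Psi_apply]

lemma entrywise_iteratedDeriv_two_Psi (x z : ℂ) :
    (Matrix.of fun i j => iteratedDeriv 2 (fun w => Psi x w i j) z)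
      = x ^ 2 • Psi x z + (2 * x * Complex.exp (x * z)) • 1 := by
  ext i j
  rw [of_apply, iteratedDeriv_succ, iteratedDeriv_one, deriv_Psi_apply]
  have := ((hasDerivAt_Psi_apply x z i j).const_mul x).add
    ((hasDerivAt_exp_mul x z).mul_const ((1 : Matrix (Fin 3) (Fin 3) ℂ) i j))
  refine this.deriv.trans ?_
  simp only [Matrix.add_apply, Matrix.smul_apply, smul_eq_mul]
  ring

theorem stmt6 (x z : ℂ) (hx : x ≠ 0) (hz : z ≠ 0) :
    (Matrix.of fun i j => iteratedDeriv 2 (fun w => Psi x w i j) z)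
        * !![0, 0, 0; 0, 0, 0; 1, 0, 0]
      + (Matrix.of fun i j => deriv (fun w => Psi x w i j) z)
        * !![0, 0, 0; 1, 0, 0; -2 * z⁻¹, 1, 0]
      + Psi x z * !![1, 0, 0; -2 * z⁻¹, 2, 0; 0, 0, 1]
      = !![1, 0, 0; x, 2, 0; x ^ 2, x, 1] * Psi x z := by
  rw [entrywise_iteratedDeriv_two_Psi, entrywise_deriv_Psi]
  ext i j
  fin_cases i <;> fin_cases j <;> simp [Psi, Matrix.mul_apply, Fin.sum_univ_three] <;>
    field_simp <;> ring
end
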